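/- Let (V,β,ρ,μ) be a representation of a Hom-pre-Lie algebra (A,·,α). Then (V,β,ρ−μ), where (ρ−μ)(x) := ρ(x) − μ(x), is a representation of the sub-adjacent Hom-Lie algebra A^C = (A,[·,·]_C,α). -/
import Mathlib


/-- A Hom-pre-Lie algebra structure on `A`: a bilinear product and an algebra
morphism `α` satisfying the Hom-pre-Lie identity. -/
def IsHomPreLie {K A : Type*} [Field K] [AddCommGroup A] [Module K A]
    (mul : A →ₗ[K] A →ₗ[K] A) (α : A →ₗ[K] A) : Prop :=
  (∀ x y, α (mul x y) = mul (α x) (α y)) ∧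
  (∀ x y z, mul (mul x y) (α z) - mul (α x) (mul y z)
      = mul (mul y x) (α z) - mul (α y) (mul x z))

/-- A representation of a Hom-Lie algebra `(L, bracket, α)` on `V` with respect to `β`. -/
def IsHomLieRep {K L V : Type*} [Field K] [AddCommGroup L] [Module K L]
    [AddCommGroup V] [Module K V]
    (bracket : L →ₗ[K] L →ₗ[K] L) (α : L →ₗ[K] L)
    (β : V →ₗ[K] V) (ρ : L →ₗ[K] Module.End K V) : Prop :=
  (∀ x, ρ (α x) ∘ₗ β = β ∘ₗ ρ x) ∧
  (∀ x y, ρ (bracket x y) ∘ₗ β = ρ (α x) ∘ₗ ρ y - ρ (α y) ∘ₗ ρ x)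

/-- A representation `(V, β, ρ, μ)` of a Hom-pre-Lie algebra `(A, mul, α)`:
`ρ` is a representation of the sub-adjacent Hom-Lie algebra (whose bracket is the
commutator `mul - mul.flip`) with respect to `β`, together with the two compatibility
conditions for `μ`. -/
def IsHomPreLieRep {K A V : Type*} [Field K] [AddCommGroup A] [Module K A]
    [AddCommGroup V] [Module K V]
    (mul : A →ₗ[K] A →ₗ[K] A) (α : A →ₗ[K] A)
    (β : V →ₗ[K] V) (ρ μ : A →ₗ[K] Module.End K V) : Prop :=
  IsHomLieRep (mul - mul.flip) α β ρ ∧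
  (∀ x, β ∘ₗ μ x = μ (α x) ∘ₗ β) ∧
  (∀ x y, μ (α y) ∘ₗ μ x - μ (mul x y) ∘ₗ β = μ (α y) ∘ₗ ρ x - ρ (α x) ∘ₗ μ y)

/-- Let `(V,β,ρ,μ)` be a representation of a Hom-pre-Lie algebra
`(A,·,α)`.  Then `(V, β, ρ−μ)` is a representation of the sub-adjacent Hom-Lie
algebra `A^C = (A, [·,·]_C, α)`, where `[x,y]_C = x·y − y·x`. -/
theorem sub_adjacent_rep_of_homPreLieRep
    {K A V : Type*} [Field K] [AddCommGroup A] [Module K A]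
    [AddCommGroup V] [Module K V]
    (mul : A →ₗ[K] A →ₗ[K] A) (α : A ≃ₗ[K] A)
    (hA : IsHomPreLie mul (α : A →ₗ[K] A))
    (β : V →ₗ[K] V) (ρ μ : A →ₗ[K] Module.End K V)
    (hrep : IsHomPreLieRep mul (α : A →ₗ[K] A) β ρ μ) :
    IsHomLieRep (mul - mul.flip) (α : A →ₗ[K] A) β (ρ - μ) := by
  obtain ⟨⟨hρ1, hρ2⟩, hμ1, hμ2⟩ := hrep
  constructor
  · intro x
    simp only [LinearMap.sub_apply, LinearMap.sub_comp, LinearMap.comp_sub,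
      hρ1 x, hμ1 x]
  · intro x y
    have h1 := hρ2 x y
    have h2 := hμ2 x y
    have h3 := hμ2 y x
    simp only [LinearMap.sub_apply, LinearMap.flip_apply, map_sub, LinearMap.sub_comp,
      LinearMap.comp_sub] at h1 h2 h3 ⊢
    linear_combination (norm := abel) h1 + h2 - h3
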